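/- arXiv:2112.03453 — 3 statements merged into one kernel-verified Lean document; each statement's English description precedes it below -/
import Mathlib

section
/- Let s > 0 and let u : ℝ³ → ℝ³ be differentiable with |u| = 1, and set Q = s(u ⊗ u − (1/3)I). Then pointwise Σ_{l,k,i,j} Q_{lk} (∂_l Q_{ij})(∂_k Q_{ij}) = 2s³ |u × curl u|² − (2s³/3)|∇u|². -/
/-- `pd u i k x` is the partial derivative `∂_k u_i (x)`. -/
noncomputable def pd (u : (Fin 3 → ℝ) → (Fin 3 → ℝ)) (i k : Fin 3) (x : Fin 3 → ℝ) : ℝ :=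
  fderiv ℝ (fun y => u y i) x (Pi.single k 1)

/-- cross product in ℝ³ -/
def cross (a b : Fin 3 → ℝ) : Fin 3 → ℝ :=
  ![a 1 * b 2 - a 2 * b 1, a 2 * b 0 - a 0 * b 2, a 0 * b 1 - a 1 * b 0]

/-- curl of a vector field on ℝ³ -/
noncomputable def curl (u : (Fin 3 → ℝ) → (Fin 3 → ℝ)) (x : Fin 3 → ℝ) : Fin 3 → ℝ :=
  ![pd u 2 1 x - pd u 1 2 x, pd u 0 2 x - pd u 2 0 x, pd u 1 0 x - pd u 0 1 x]

/-- `pdQ Q i j k x` is the partial derivative `∂_k Q_{ij}(x)` of a matrix-valued field. -/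
noncomputable def pdQ (Q : (Fin 3 → ℝ) → Fin 3 → Fin 3 → ℝ) (i j k : Fin 3)
    (x : Fin 3 → ℝ) : ℝ :=
  fderiv ℝ (fun y => Q y i j) x (Pi.single k 1)

theorem stmt3 (s : ℝ) (hs : 0 < s) (u : (Fin 3 → ℝ) → Fin 3 → ℝ)
    (hdiff : ∀ i, Differentiable ℝ (fun y => u y i))
    (hu : ∀ y, ∑ i, u y i ^ 2 = 1)
    (Q : (Fin 3 → ℝ) → Fin 3 → Fin 3 → ℝ)
    (hQ : ∀ y i j, Q y i j = s * (u y i * u y j - (1/3) * (if i = j then (1:ℝ) else 0))) :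
    ∀ x, ∑ l, ∑ k, ∑ i, ∑ j, Q x l k * pdQ Q i j l x * pdQ Q i j k x
      = 2 * s^3 * (∑ i, (cross (u x) (curl u x) i) ^ 2)
        - 2 * s^3/3 * (∑ k, ∑ i, (pd u i k x) ^ 2) := by
  intro x
  have hd : ∀ i, DifferentiableAt ℝ (fun y => u y i) x := fun i => (hdiff i) x
  -- formula for pdQ
  have hdQ : ∀ i j k : Fin 3,
      pdQ Q i j k x = s * (u x i * pd u j k x + u x j * pd u i k x) := by
    intro i j k
    have hfun : (fun y => Q y i j)
        = fun y => s * (u y i * u y j - (1/3) * (if i = j then (1:ℝ) else 0)) :=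
      funext fun y => hQ y i j
    have h1 : HasFDerivAt (fun y => u y i * u y j)
        (u x i • fderiv ℝ (fun y => u y j) x + u x j • fderiv ℝ (fun y => u y i) x) x :=
      (hd i).hasFDerivAt.mul (hd j).hasFDerivAt
    have h2 := ((h1.sub_const ((1/3) * (if i = j then (1:ℝ) else 0))).const_mul s)
    rw [pdQ, hfun, h2.fderiv]
    simp [pd, mul_add]
  -- constraint
  have hC : ∀ k : Fin 3,
      u x 0 * pd u 0 k x + u x 1 * pd u 1 k x + u x 2 * pd u 2 k x = 0 := by
    intro k
    have hsq : ∀ i : Fin 3, HasFDerivAt (fun y => u y i * u y i)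
        (u x i • fderiv ℝ (fun y => u y i) x + u x i • fderiv ℝ (fun y => u y i) x) x :=
      fun i => (hd i).hasFDerivAt.mul (hd i).hasFDerivAt
    have hsum : HasFDerivAt (fun y => (u y 0 * u y 0 + u y 1 * u y 1) + u y 2 * u y 2) _ x :=
      ((hsq 0).add (hsq 1)).add (hsq 2)
    have hfun : (fun y => (u y 0 * u y 0 + u y 1 * u y 1) + u y 2 * u y 2)
        = fun _ => (1:ℝ) := by
      funext y
      have hy := hu y
      rw [Fin.sum_univ_three] at hy
      linear_combination hy
    rw [hfun] at hsum
    have h0 := hsum.unique (hasFDerivAt_const 1 x)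
    have h0' := DFunLike.congr_fun h0 (Pi.single k 1)
    simp only [ContinuousLinearMap.add_apply, ContinuousLinearMap.coe_smul',
      Pi.smul_apply, ContinuousLinearMap.zero_apply, smul_eq_mul] at h0'
    simp only [pd]
    linarith [h0']
  have h1 : u x 0 ^ 2 + u x 1 ^ 2 + u x 2 ^ 2 = 1 := by
    have hy := hu x; rwa [Fin.sum_univ_three] at hy
  simp only [Fin.sum_univ_three, hQ, hdQ, cross, curl, Matrix.cons_val_zero,
    Matrix.cons_val_one, Matrix.head_cons, Matrix.cons_val_two, Matrix.tail_cons]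
  simp only [Fin.reduceEq, reduceIte]
  norm_num
  linear_combination (s^3*(2*((u x 0 * pd u 0 0 x + u x 1 * pd u 0 1 x + u x 2 * pd u 0 2 x)^2 + (u x 0 * pd u 1 0 x + u x 1 * pd u 1 1 x + u x 2 * pd u 1 2 x)^2 + (u x 0 * pd u 2 0 x + u x 1 * pd u 2 1 x + u x 2 * pd u 2 2 x)^2) - (2/3)*(pd u 0 0 x^2 + pd u 0 1 x^2 + pd u 0 2 x^2 + pd u 1 0 x^2 + pd u 1 1 x^2 + pd u 1 2 x^2 + pd u 2 0 x^2 + pd u 2 1 x^2 + pd u 2 2 x^2))) * h1 + (s^3*(2*u x 0*(u x 0 * (u x 0 * pd u 0 0 x + u x 1 * pd u 1 0 x + u x 2 * pd u 2 0 x) + u x 1 * (u x 0 * pd u 0 1 x + u x 1 * pd u 1 1 x + u x 2 * pd u 2 1 x) + u x 2 * (u x 0 * pd u 0 2 x + u x 1 * pd u 1 2 x + u x 2 * pd u 2 2 x)) + 4*(u x 0 * pd u 0 0 x + u x 1 * pd u 0 1 x + u x 2 * pd u 0 2 x) - (8/3)*(u x 0 * pd u 0 0 x + u x 1 * pd u 1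 0 x + u x 2 * pd u 2 0 x))) * hC 0 + (s^3*(2*u x 1*(u x 0 * (u x 0 * pd u 0 0 x + u x 1 * pd u 1 0 x + u x 2 * pd u 2 0 x) + u x 1 * (u x 0 * pd u 0 1 x + u x 1 * pd u 1 1 x + u x 2 * pd u 2 1 x) + u x 2 * (u x 0 * pd u 0 2 x + u x 1 * pd u 1 2 x + u x 2 * pd u 2 2 x)) + 4*(u x 0 * pd u 1 0 x + u x 1 * pd u 1 1 x + u x 2 * pd u 1 2 x) - (8/3)*(u x 0 * pd u 0 1 x + u x 1 * pd u 1 1 x + u x 2 * pd u 2 1 x))) * hC 1 + (s^3*(2*u x 2*(u x 0 * (u x 0 * pd u 0 0 x + u x 1 * pd u 1 0 x + u x 2 * pd u 2 0 x) + u x 1 * (u x 0 * pd u 0 1 x + u x 1 * pd u 1 1 x + u x 2 * pd u 2 1 x) + u x 2 * (u x 0 * pd u 0 2 x + u x 1 * pd u 1 2 x + u x 2 * pd u 2 2 x)) + 4*(u x 0 * pd u 2 0 x + u x 1 * pd u 2 1 x + u x 2 * pd u 2 2 x) - (8/3)*(u x 0 * pd u 0 2 x + u x 1 * pd u 1 2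 x + u x 2 * pd u 2 2 x))) * hC 2
end

section
/- Let s > 0 and let u : ℝ³ → ℝ³ be differentiable with |u| = 1, and set Q = s(u ⊗ u − (1/3)I). Then pointwise Σ_{n,i,j}(Σ_l Q_{ln} ∂_l Q_{ij})(Σ_k Q_{kn} ∂_k Q_{ij}) = (2s⁴/3)|u × curl u|² + (2s⁴/9)|∇u|². -/
set_option maxRecDepth 40000 in
set_option maxHeartbeats 4000000 in
theorem stmt4 (s : ℝ) (hs : 0 < s) (u : (Fin 3 → ℝ) → Fin 3 → ℝ)
    (hdiff : ∀ i, Differentiable ℝ (fun y => u y i))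
    (hu : ∀ y, ∑ i, u y i ^ 2 = 1)
    (Q : (Fin 3 → ℝ) → Fin 3 → Fin 3 → ℝ)
    (hQ : ∀ y i j, Q y i j = s * (u y i * u y j - (1/3) * (if i = j then (1:ℝ) else 0))) :
    ∀ x, ∑ n, ∑ i, ∑ j,
        (∑ l, Q x l n * pdQ Q i j l x) * (∑ k, Q x k n * pdQ Q i j k x)
      = 2 * s^4/3 * (∑ i, (cross (u x) (curl u x) i) ^ 2)
        + 2 * s^4/9 * (∑ k, ∑ i, (pd u i k x) ^ 2) := by
  intro x
  have hdU : ∀ i, DifferentiableAt ℝ (fun y => u y i) x := fun i => (hdiff i) x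
  have hpdQ : ∀ i j k : Fin 3, pdQ Q i j k x
      = s * (pd u i k x * u x j + u x i * pd u j k x) := by
    intro i j k
    have h1 : (fun y => Q y i j)
        = fun y => s * (u y i * u y j - (1/3) * (if i = j then (1:ℝ) else 0)) :=
      funext fun y => hQ y i j
    have hmul : HasFDerivAt (fun y => u y i * u y j)
        ((u x i) • fderiv ℝ (fun y => u y j) x + (u x j) • fderiv ℝ (fun y => u y i) x) x :=
      ((hdU i).hasFDerivAt).mul ((hdU j).hasFDerivAt)
    have hfin := ((hmul.sub_const ((1/3) * (if i = j then (1:ℝ) else 0))).const_mul s)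
    rw [pdQ, h1, hfin.fderiv]
    simp only [ContinuousLinearMap.smul_apply, ContinuousLinearMap.add_apply, smul_eq_mul, pd]
    ring
  have ho : ∀ k : Fin 3,
      u x 0 * pd u 0 k x + u x 1 * pd u 1 k x + u x 2 * pd u 2 k x = 0 := by
    intro k
    have hsq : ∀ i : Fin 3, HasFDerivAt (fun y => u y i * u y i)
        ((u x i) • fderiv ℝ (fun y => u y i) x + (u x i) • fderiv ℝ (fun y => u y i) x) x :=
      fun i => ((hdU i).hasFDerivAt).mul ((hdU i).hasFDerivAt)
    have hsum := ((hsq 0).add (hsq 1)).add (hsq 2)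
    have hconst : (fun y => u y 0 * u y 0 + u y 1 * u y 1 + u y 2 * u y 2)
        = fun _ : Fin 3 → ℝ => (1:ℝ) := by
      funext y
      have h := hu y
      simp only [Fin.sum_univ_three] at h
      nlinarith [h]
    rw [show (((fun y => u y 0 * u y 0) + fun y => u y 1 * u y 1) + fun y => u y 2 * u y 2) = fun y => u y 0 * u y 0 + u y 1 * u y 1 + u y 2 * u y 2 from rfl, hconst] at hsum
    have hz := hsum.unique (hasFDerivAt_const (1:ℝ) x)
    have happ := congrArg (fun L : (Fin 3 → ℝ) →L[ℝ] ℝ => L (Pi.single k 1)) hz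
    simp only [ContinuousLinearMap.add_apply, ContinuousLinearMap.smul_apply, smul_eq_mul, ContinuousLinearMap.zero_apply] at happ
    simp only [pd]
    linarith [happ]
  have hc : u x 0 ^ 2 + u x 1 ^ 2 + u x 2 ^ 2 = 1 := by
    have h := hu x; simp only [Fin.sum_univ_three] at h; exact h
  have ho0 := ho 0
  have ho1 := ho 1
  have ho2 := ho 2
  simp only [Fin.sum_univ_three]
  simp only [hpdQ]
  simp only [hQ]
  simp only [cross, curl, Matrix.cons_val_zero, Matrix.cons_val_one, Matrix.head_cons,
    Matrix.cons_val_two, Matrix.tail_cons, Fin.reduceEq, if_true, if_false, reduceIte]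
  linear_combination
    (((2:ℝ)/9) * s^4 * (u x 2) * (pd u 2 0 x) + ((4:ℝ)/3) * s^4 * (u x 2) * (pd u 0 2 x) + ((4:ℝ)/3) * s^4 * (u x 2)^3 * (pd u 2 0 x) + (-2:ℝ) * s^4 * (u x 2)^5 * (pd u 2 0 x) + ((2:ℝ)/9) * s^4 * (u x 1) * (pd u 1 0 x) + ((4:ℝ)/3) * s^4 * (u x 1) * (pd u 0 1 x) + ((4:ℝ)/3) * s^4 * (u x 1) * (u x 2)^2 * (pd u 1 0 x) + (-2:ℝ) * s^4 * (u x 1) * (u x 2)^4 * (pd u 1 0 x) + ((4:ℝ)/3) * s^4 * (u x 1)^2 * (u x 2) * (pd u 2 0 x) + (-4:ℝ) * s^4 * (u x 1)^2 * (u x 2)^3 * (pd u 2 0 x) + ((4:ℝ)/3) * s^4 * (u x 1)^3 * (pd u 1 0 x) + (-4:ℝ) * s^4 * (u x 1)^3 * (u x 2)^2 * (pd u 1 0 x) + (-2:ℝ) * s^4 * (u x 1)^4 * (u x 2) * (pd u 2 0 x) + (-2:ℝ) * s^4 * (u x 1)^5 * (pd u 1 0 x) + ((2:ℝ)/9) *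 s^4 * (u x 0) * (pd u 0 0 x) + ((-4:ℝ)/3) * s^4 * (u x 0) * (u x 2)^2 * (pd u 2 2 x) + ((-4:ℝ)/3) * s^4 * (u x 0) * (u x 2)^2 * (pd u 0 0 x) + (8:ℝ) * s^4 * (u x 0) * (u x 2)^4 * (pd u 2 2 x) + (2:ℝ) * s^4 * (u x 0) * (u x 2)^4 * (pd u 0 0 x) + ((-4:ℝ)/3) * s^4 * (u x 0) * (u x 1) * (u x 2) * (pd u 2 1 x) + ((-4:ℝ)/3) * s^4 * (u x 0) * (u x 1) * (u x 2) * (pd u 1 2 x) + (8:ℝ) * s^4 * (u x 0) * (u x 1) * (u x 2)^3 * (pd u 2 1 x) + (8:ℝ) * s^4 * (u x 0) * (u x 1) * (u x 2)^3 * (pd u 1 2 x) + ((-4:ℝ)/3) * s^4 * (u x 0) * (u x 1)^2 * (pd u 1 1 x) + ((-4:ℝ)/3) * s^4 * (u x 0) * (u x 1)^2 * (pd u 0 0 x) + (8:ℝ) * s^4 * (u x 0) * (u x 1)^2 * (u x 2)^2 * (pd u 2 2 x) + (8:ℝ) * s^4 * (u x 0) * (u x 1)^2 * (u x 2)^2 *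 (pd u 1 1 x) + (4:ℝ) * s^4 * (u x 0) * (u x 1)^2 * (u x 2)^2 * (pd u 0 0 x) + (8:ℝ) * s^4 * (u x 0) * (u x 1)^3 * (u x 2) * (pd u 2 1 x) + (8:ℝ) * s^4 * (u x 0) * (u x 1)^3 * (u x 2) * (pd u 1 2 x) + (8:ℝ) * s^4 * (u x 0) * (u x 1)^4 * (pd u 1 1 x) + (2:ℝ) * s^4 * (u x 0) * (u x 1)^4 * (pd u 0 0 x) + ((-16:ℝ)/3) * s^4 * (u x 0)^2 * (u x 2) * (pd u 0 2 x) + (-2:ℝ) * s^4 * (u x 0)^2 * (u x 2)^3 * (pd u 2 0 x) + (12:ℝ) * s^4 * (u x 0)^2 * (u x 2)^3 * (pd u 0 2 x) + ((-16:ℝ)/3) * s^4 * (u x 0)^2 * (u x 1) * (pd u 0 1 x) + (-2:ℝ) * s^4 * (u x 0)^2 * (u x 1) * (u x 2)^2 * (pd u 1 0 x) + (12:ℝ) * s^4 * (u x 0)^2 * (u x 1) * (u x 2)^2 * (pd u 0 1 x) + (-2:ℝ) * s^4 * (u x 0)^2 * (u x 1)^2 * (u x 2) * (pd u 2 0 x)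 + (12:ℝ) * s^4 * (u x 0)^2 * (u x 1)^2 * (u x 2) * (pd u 0 2 x) + (-2:ℝ) * s^4 * (u x 0)^2 * (u x 1)^3 * (pd u 1 0 x) + (12:ℝ) * s^4 * (u x 0)^2 * (u x 1)^3 * (pd u 0 1 x) + ((-8:ℝ)/3) * s^4 * (u x 0)^3 * (pd u 0 0 x) + (4:ℝ) * s^4 * (u x 0)^3 * (u x 2)^2 * (pd u 2 2 x) + (6:ℝ) * s^4 * (u x 0)^3 * (u x 2)^2 * (pd u 0 0 x) + (4:ℝ) * s^4 * (u x 0)^3 * (u x 1) * (u x 2) * (pd u 2 1 x) + (4:ℝ) * s^4 * (u x 0)^3 * (u x 1) * (u x 2) * (pd u 1 2 x) + (4:ℝ) * s^4 * (u x 0)^3 * (u x 1)^2 * (pd u 1 1 x) + (6:ℝ) * s^4 * (u x 0)^3 * (u x 1)^2 * (pd u 0 0 x) + (8:ℝ) * s^4 * (u x 0)^4 * (u x 2) * (pd u 0 2 x) + (8:ℝ) * s^4 * (u x 0)^4 * (u x 1) * (pd u 0 1 x) + (4:ℝ) * s^4 * (u x 0)^5 * (pd u 0 0 x)) * ho0 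+
    (((-4:ℝ)/9) * s^4 * (u x 2) * (pd u 2 1 x) + ((4:ℝ)/3) * s^4 * (u x 2) * (pd u 1 2 x) + ((8:ℝ)/9) * s^4 * (u x 1) * (pd u 1 1 x) + ((-4:ℝ)/3) * s^4 * (u x 1) * (u x 2)^2 * (pd u 2 2 x) + (8:ℝ) * s^4 * (u x 1) * (u x 2)^4 * (pd u 2 2 x) + ((2:ℝ)/3) * s^4 * (u x 1)^2 * (u x 2) * (pd u 2 1 x) + ((-4:ℝ)/3) * s^4 * (u x 1)^2 * (u x 2) * (pd u 1 2 x) + (8:ℝ) * s^4 * (u x 1)^2 * (u x 2)^3 * (pd u 1 2 x) + ((2:ℝ)/3) * s^4 * (u x 1)^3 * (pd u 1 1 x) + (8:ℝ) * s^4 * (u x 1)^3 * (u x 2)^2 * (pd u 2 2 x) + (8:ℝ) * s^4 * (u x 1)^4 * (u x 2) * (pd u 1 2 x) + ((4:ℝ)/3) * s^4 * (u x 0) * (pd u 1 0 x) + ((-4:ℝ)/9) * s^4 * (u x 0) * (pd u 0 1 x) + ((8:ℝ)/3) * s^4 * (u x 0) * (u x 1) * (u x 2) * (pd u 2 0 x)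 + ((-16:ℝ)/3) * s^4 * (u x 0) * (u x 1) * (u x 2) * (pd u 0 2 x) + (-8:ℝ) * s^4 * (u x 0) * (u x 1) * (u x 2)^3 * (pd u 2 0 x) + (12:ℝ) * s^4 * (u x 0) * (u x 1) * (u x 2)^3 * (pd u 0 2 x) + ((8:ℝ)/3) * s^4 * (u x 0) * (u x 1)^2 * (pd u 1 0 x) + ((-10:ℝ)/3) * s^4 * (u x 0) * (u x 1)^2 * (pd u 0 1 x) + (-8:ℝ) * s^4 * (u x 0) * (u x 1)^2 * (u x 2)^2 * (pd u 1 0 x) + (4:ℝ) * s^4 * (u x 0) * (u x 1)^2 * (u x 2)^2 * (pd u 0 1 x) + (-8:ℝ) * s^4 * (u x 0) * (u x 1)^3 * (u x 2) * (pd u 2 0 x) + (12:ℝ) * s^4 * (u x 0) * (u x 1)^3 * (u x 2) * (pd u 0 2 x) + (-8:ℝ) * s^4 * (u x 0) * (u x 1)^4 * (pd u 1 0 x) + (4:ℝ) * s^4 * (u x 0) * (u x 1)^4 * (pd u 0 1 x) + ((-4:ℝ)/3) * s^4 * (u x 0)^2 * (u x 1) * (pd u 0 0 x) + (4:ℝ)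 * s^4 * (u x 0)^2 * (u x 1) * (u x 2)^2 * (pd u 2 2 x) + (-4:ℝ) * s^4 * (u x 0)^2 * (u x 1) * (u x 2)^2 * (pd u 0 0 x) + (4:ℝ) * s^4 * (u x 0)^2 * (u x 1)^2 * (u x 2) * (pd u 1 2 x) + (-4:ℝ) * s^4 * (u x 0)^2 * (u x 1)^3 * (pd u 0 0 x) + (-4:ℝ) * s^4 * (u x 0)^3 * (u x 1) * (u x 2) * (pd u 2 0 x) + (8:ℝ) * s^4 * (u x 0)^3 * (u x 1) * (u x 2) * (pd u 0 2 x) + (-4:ℝ) * s^4 * (u x 0)^3 * (u x 1)^2 * (pd u 1 0 x) + (4:ℝ) * s^4 * (u x 0)^3 * (u x 1)^2 * (pd u 0 1 x)) * ho1 +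
    (((8:ℝ)/9) * s^4 * (u x 2) * (pd u 2 2 x) + ((2:ℝ)/3) * s^4 * (u x 2)^3 * (pd u 2 2 x) + ((4:ℝ)/3) * s^4 * (u x 1) * (pd u 2 1 x) + ((-4:ℝ)/9) * s^4 * (u x 1) * (pd u 1 2 x) + ((8:ℝ)/3) * s^4 * (u x 1) * (u x 2)^2 * (pd u 2 1 x) + ((2:ℝ)/3) * s^4 * (u x 1) * (u x 2)^2 * (pd u 1 2 x) + (-8:ℝ) * s^4 * (u x 1) * (u x 2)^4 * (pd u 2 1 x) + ((8:ℝ)/3) * s^4 * (u x 1)^2 * (u x 2) * (pd u 1 1 x) + (-8:ℝ) * s^4 * (u x 1)^2 * (u x 2)^3 * (pd u 1 1 x) + (-8:ℝ) * s^4 * (u x 1)^3 * (u x 2)^2 * (pd u 2 1 x) + (-8:ℝ) * s^4 * (u x 1)^4 * (u x 2) * (pd u 1 1 x) + ((4:ℝ)/3) * s^4 * (u x 0) * (pd u 2 0 x) + ((-4:ℝ)/9) * s^4 * (u x 0) * (pd u 0 2 x) + ((8:ℝ)/3) * s^4 * (u x 0) * (u x 2)^2 * (pd u 2 0 x) + ((-10:ℝ)/3)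 * s^4 * (u x 0) * (u x 2)^2 * (pd u 0 2 x) + (-8:ℝ) * s^4 * (u x 0) * (u x 2)^4 * (pd u 2 0 x) + (4:ℝ) * s^4 * (u x 0) * (u x 2)^4 * (pd u 0 2 x) + ((8:ℝ)/3) * s^4 * (u x 0) * (u x 1) * (u x 2) * (pd u 1 0 x) + ((-4:ℝ)/3) * s^4 * (u x 0) * (u x 1) * (u x 2) * (pd u 0 1 x) + (-8:ℝ) * s^4 * (u x 0) * (u x 1) * (u x 2)^3 * (pd u 1 0 x) + (-4:ℝ) * s^4 * (u x 0) * (u x 1) * (u x 2)^3 * (pd u 0 1 x) + (-8:ℝ) * s^4 * (u x 0) * (u x 1)^2 * (u x 2)^2 * (pd u 2 0 x) + (4:ℝ) * s^4 * (u x 0) * (u x 1)^2 * (u x 2)^2 * (pd u 0 2 x) + (-8:ℝ) * s^4 * (u x 0) * (u x 1)^3 * (u x 2) * (pd u 1 0 x) + (-4:ℝ) * s^4 * (u x 0) * (u x 1)^3 * (u x 2) * (pd u 0 1 x) + ((-4:ℝ)/3) * s^4 * (u x 0)^2 * (u x 2) * (pd u 0 0 x) + (-4:ℝ) * s^4 *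 (u x 0)^2 * (u x 2)^3 * (pd u 0 0 x) + (-4:ℝ) * s^4 * (u x 0)^2 * (u x 1) * (u x 2)^2 * (pd u 2 1 x) + (-4:ℝ) * s^4 * (u x 0)^2 * (u x 1)^2 * (u x 2) * (pd u 1 1 x) + (-4:ℝ) * s^4 * (u x 0)^2 * (u x 1)^2 * (u x 2) * (pd u 0 0 x) + (-4:ℝ) * s^4 * (u x 0)^3 * (u x 2)^2 * (pd u 2 0 x) + (4:ℝ) * s^4 * (u x 0)^3 * (u x 2)^2 * (pd u 0 2 x) + (-4:ℝ) * s^4 * (u x 0)^3 * (u x 1) * (u x 2) * (pd u 1 0 x)) * ho2 +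
    (((2:ℝ)/9) * s^4 * (pd u 2 2 x)^2 + ((2:ℝ)/9) * s^4 * (pd u 2 1 x)^2 + ((2:ℝ)/9) * s^4 * (pd u 2 0 x)^2 + ((2:ℝ)/9) * s^4 * (pd u 1 2 x)^2 + ((2:ℝ)/9) * s^4 * (pd u 1 1 x)^2 + ((2:ℝ)/9) * s^4 * (pd u 1 0 x)^2 + ((2:ℝ)/9) * s^4 * (pd u 0 2 x)^2 + ((2:ℝ)/9) * s^4 * (pd u 0 1 x)^2 + ((2:ℝ)/9) * s^4 * (pd u 0 0 x)^2 + ((2:ℝ)/3) * s^4 * (u x 2)^2 * (pd u 2 2 x)^2 + ((2:ℝ)/3) * s^4 * (u x 2)^2 * (pd u 2 0 x)^2 + ((2:ℝ)/3) * s^4 * (u x 2)^2 * (pd u 1 2 x)^2 + ((2:ℝ)/3) * s^4 * (u x 2)^2 * (pd u 0 2 x)^2 + (4:ℝ) * s^4 * (u x 2)^4 * (pd u 2 2 x)^2 + (2:ℝ) * s^4 * (u x 2)^4 * (pd u 2 0 x)^2 + (2:ℝ) * s^4 * (u x 2)^4 * (pd u 1 2 x)^2 + (2:ℝ) * s^4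 * (u x 2)^4 * (pd u 0 2 x)^2 + ((4:ℝ)/3) * s^4 * (u x 1) * (u x 2) * (pd u 2 1 x) * (pd u 2 2 x) + ((4:ℝ)/3) * s^4 * (u x 1) * (u x 2) * (pd u 1 1 x) * (pd u 1 2 x) + ((4:ℝ)/3) * s^4 * (u x 1) * (u x 2) * (pd u 1 0 x) * (pd u 2 0 x) + ((4:ℝ)/3) * s^4 * (u x 1) * (u x 2) * (pd u 0 1 x) * (pd u 0 2 x) + (8:ℝ) * s^4 * (u x 1) * (u x 2)^3 * (pd u 2 1 x) * (pd u 2 2 x) + (4:ℝ) * s^4 * (u x 1) * (u x 2)^3 * (pd u 1 2 x) * (pd u 2 2 x) + (4:ℝ) * s^4 * (u x 1) * (u x 2)^3 * (pd u 1 1 x) * (pd u 1 2 x) + (4:ℝ) * s^4 * (u x 1) * (u x 2)^3 * (pd u 1 0 x) * (pd u 2 0 x) + (4:ℝ) * s^4 * (u x 1) * (u x 2)^3 * (pd u 0 1 x) * (pd u 0 2 x) + ((2:ℝ)/3) * s^4 * (u x 1)^2 * (pd u 2 1 x)^2 + ((2:ℝ)/3) * s^4 * (u x 1)^2 * (pd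 u 1 1 x)^2 + ((2:ℝ)/3) * s^4 * (u x 1)^2 * (pd u 1 0 x)^2 + ((2:ℝ)/3) * s^4 * (u x 1)^2 * (pd u 0 1 x)^2 + (2:ℝ) * s^4 * (u x 1)^2 * (u x 2)^2 * (pd u 2 2 x)^2 + (4:ℝ) * s^4 * (u x 1)^2 * (u x 2)^2 * (pd u 2 1 x)^2 + (2:ℝ) * s^4 * (u x 1)^2 * (u x 2)^2 * (pd u 2 0 x)^2 + (4:ℝ) * s^4 * (u x 1)^2 * (u x 2)^2 * (pd u 1 2 x) * (pd u 2 1 x) + (4:ℝ) * s^4 * (u x 1)^2 * (u x 2)^2 * (pd u 1 2 x)^2 + (4:ℝ) * s^4 * (u x 1)^2 * (u x 2)^2 * (pd u 1 1 x) * (pd u 2 2 x) + (2:ℝ) * s^4 * (u x 1)^2 * (u x 2)^2 * (pd u 1 1 x)^2 + (2:ℝ) * s^4 * (u x 1)^2 * (u x 2)^2 * (pd u 1 0 x)^2 + (2:ℝ) * s^4 * (u x 1)^2 * (u x 2)^2 * (pd u 0 2 x)^2 + (2:ℝ) * s^4 * (u x 1)^2 * (u x 2)^2 * (pd u 0 1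 x)^2 + (4:ℝ) * s^4 * (u x 1)^3 * (u x 2) * (pd u 2 1 x) * (pd u 2 2 x) + (4:ℝ) * s^4 * (u x 1)^3 * (u x 2) * (pd u 1 1 x) * (pd u 2 1 x) + (8:ℝ) * s^4 * (u x 1)^3 * (u x 2) * (pd u 1 1 x) * (pd u 1 2 x) + (4:ℝ) * s^4 * (u x 1)^3 * (u x 2) * (pd u 1 0 x) * (pd u 2 0 x) + (4:ℝ) * s^4 * (u x 1)^3 * (u x 2) * (pd u 0 1 x) * (pd u 0 2 x) + (2:ℝ) * s^4 * (u x 1)^4 * (pd u 2 1 x)^2 + (4:ℝ) * s^4 * (u x 1)^4 * (pd u 1 1 x)^2 + (2:ℝ) * s^4 * (u x 1)^4 * (pd u 1 0 x)^2 + (2:ℝ) * s^4 * (u x 1)^4 * (pd u 0 1 x)^2 + ((4:ℝ)/3) * s^4 * (u x 0) * (u x 2) * (pd u 2 0 x) * (pd u 2 2 x) + ((4:ℝ)/3) * s^4 * (u x 0) * (u x 2) * (pd u 1 0 x) * (pd u 1 2 x) + ((4:ℝ)/3) * s^4 * (u x 0) * (u x 2) * (pd u 0 0 x) * (pd u 0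 2 x) + (8:ℝ) * s^4 * (u x 0) * (u x 2)^3 * (pd u 2 0 x) * (pd u 2 2 x) + (4:ℝ) * s^4 * (u x 0) * (u x 2)^3 * (pd u 1 0 x) * (pd u 1 2 x) + (4:ℝ) * s^4 * (u x 0) * (u x 2)^3 * (pd u 0 0 x) * (pd u 0 2 x) + ((4:ℝ)/3) * s^4 * (u x 0) * (u x 1) * (pd u 2 0 x) * (pd u 2 1 x) + ((4:ℝ)/3) * s^4 * (u x 0) * (u x 1) * (pd u 1 0 x) * (pd u 1 1 x) + ((4:ℝ)/3) * s^4 * (u x 0) * (u x 1) * (pd u 0 0 x) * (pd u 0 1 x) + (8:ℝ) * s^4 * (u x 0) * (u x 1) * (u x 2)^2 * (pd u 2 0 x) * (pd u 2 1 x) + (4:ℝ) * s^4 * (u x 0) * (u x 1) * (u x 2)^2 * (pd u 1 2 x) * (pd u 2 0 x) + (4:ℝ) * s^4 * (u x 0) * (u x 1) * (u x 2)^2 * (pd u 1 0 x) * (pd u 2 2 x) + (4:ℝ) * s^4 * (u x 0) * (u x 1) * (u x 2)^2 * (pd u 1 0 x) * (pd u 1 1 x) + (4:ℝ) * s^4 *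 (u x 0) * (u x 1) * (u x 2)^2 * (pd u 0 0 x) * (pd u 0 1 x) + (4:ℝ) * s^4 * (u x 0) * (u x 1)^2 * (u x 2) * (pd u 2 0 x) * (pd u 2 2 x) + (4:ℝ) * s^4 * (u x 0) * (u x 1)^2 * (u x 2) * (pd u 1 1 x) * (pd u 2 0 x) + (4:ℝ) * s^4 * (u x 0) * (u x 1)^2 * (u x 2) * (pd u 1 0 x) * (pd u 2 1 x) + (8:ℝ) * s^4 * (u x 0) * (u x 1)^2 * (u x 2) * (pd u 1 0 x) * (pd u 1 2 x) + (4:ℝ) * s^4 * (u x 0) * (u x 1)^2 * (u x 2) * (pd u 0 0 x) * (pd u 0 2 x) + (4:ℝ) * s^4 * (u x 0) * (u x 1)^3 * (pd u 2 0 x) * (pd u 2 1 x) + (8:ℝ) * s^4 * (u x 0) * (u x 1)^3 * (pd u 1 0 x) * (pd u 1 1 x) + (4:ℝ) * s^4 * (u x 0) * (u x 1)^3 * (pd u 0 0 x) * (pd u 0 1 x) + ((2:ℝ)/3) * s^4 * (u x 0)^2 * (pd u 2 0 x)^2 + ((2:ℝ)/3) * s^4 * (u x 0)^2 * (pd u 1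 0 x)^2 + (2:ℝ) * s^4 * (u x 0)^2 * (u x 2)^2 * (pd u 2 2 x)^2 + (4:ℝ) * s^4 * (u x 0)^2 * (u x 2)^2 * (pd u 2 0 x)^2 + (2:ℝ) * s^4 * (u x 0)^2 * (u x 2)^2 * (pd u 1 2 x)^2 + (2:ℝ) * s^4 * (u x 0)^2 * (u x 2)^2 * (pd u 1 0 x)^2 + (4:ℝ) * s^4 * (u x 0)^2 * (u x 1) * (u x 2) * (pd u 2 1 x) * (pd u 2 2 x) + (4:ℝ) * s^4 * (u x 0)^2 * (u x 1) * (u x 2) * (pd u 1 1 x) * (pd u 1 2 x) + (4:ℝ) * s^4 * (u x 0)^2 * (u x 1) * (u x 2) * (pd u 1 0 x) * (pd u 2 0 x) + (2:ℝ) * s^4 * (u x 0)^2 * (u x 1)^2 * (pd u 2 1 x)^2 + (2:ℝ) * s^4 * (u x 0)^2 * (u x 1)^2 * (pd u 2 0 x)^2 + (2:ℝ) * s^4 * (u x 0)^2 * (u x 1)^2 * (pd u 1 1 x)^2 + (4:ℝ) * s^4 * (u x 0)^2 * (u x 1)^2 * (pd u 1 0 x)^2 + (4:ℝ) * s^4 *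 (u x 0)^3 * (u x 2) * (pd u 2 0 x) * (pd u 2 2 x) + (4:ℝ) * s^4 * (u x 0)^3 * (u x 2) * (pd u 1 0 x) * (pd u 1 2 x) + (4:ℝ) * s^4 * (u x 0)^3 * (u x 1) * (pd u 2 0 x) * (pd u 2 1 x) + (4:ℝ) * s^4 * (u x 0)^3 * (u x 1) * (pd u 1 0 x) * (pd u 1 1 x) + (2:ℝ) * s^4 * (u x 0)^4 * (pd u 2 0 x)^2 + (2:ℝ) * s^4 * (u x 0)^4 * (pd u 1 0 x)^2) * hc
end

section
/- Let s > 0 and u : ℝ³ → ℝ³ differentiable with |u| = 1, Q = s(u⊗u − (1/3)I). Then pointwise s²(div u)² = Σ_i ( Σ_j (s⁻¹Q + (1/3)I)_{ij} (∇·Q_j) )², where Q_j denotes the j-th column of Q and ∇·Q_j = Σ_k ∂_k Q_{kj}. -/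
theorem stmt14 (s : ℝ) (hs : 0 < s) (u : (Fin 3 → ℝ) → Fin 3 → ℝ)
    (hdiff : ∀ i, Differentiable ℝ (fun y => u y i))
    (hu : ∀ y, ∑ i, u y i ^ 2 = 1)
    (Q : (Fin 3 → ℝ) → Fin 3 → Fin 3 → ℝ)
    (hQ : ∀ y i j, Q y i j = s * (u y i * u y j - (1/3) * (if i = j then (1:ℝ) else 0))) :
    ∀ x, s^2 * (∑ i, pd u i i x) ^ 2
      = ∑ i, (∑ j, (s⁻¹ * Q x i j + (1/3) * (if i = j then (1:ℝ) else 0))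
                * (∑ k, pdQ Q k j k x)) ^ 2 := by
  intro x
  -- coefficient identity
  have hc : ∀ i j, s⁻¹ * Q x i j + (1/3) * (if i = j then (1:ℝ) else 0)
      = u x i * u x j := by
    intro i j
    rw [hQ]
    field_simp
    ring
  -- derivative of Q
  have hd : ∀ i j k, pdQ Q i j k x
      = s * (pd u i k x * u x j + u x i * pd u j k x) := by
    intro i j k
    have hfun : (fun y => Q y i j)
        = fun y => s * (u y i * u y j - (1/3) * (if i = j then (1:ℝ) else 0)) :=
      funext fun y => hQ y i j
    have h1 := (hdiff i x).hasFDerivAt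
    have h2 := (hdiff j x).hasFDerivAt
    have h := (((h1.fun_mul h2).sub_const ((1/3) * (if i = j then (1:ℝ) else 0))).const_mul s)
    rw [pdQ, hfun, h.fderiv]
    simp [pd, ContinuousLinearMap.smul_apply]
    ring
  -- orthogonality: ∑_j u_j ∂_k u_j = 0
  have hz : ∀ k, ∑ j, u x j * pd u j k x = 0 := by
    intro k
    have hsum : HasFDerivAt (fun y => ∑ j, u y j * u y j)
        (∑ j, (u x j • (fderiv ℝ (fun y => u y j) x)
          + u x j • (fderiv ℝ (fun y => u y j) x))) x :=
      HasFDerivAt.fun_sum (fun j _ => ((hdiff j x).hasFDerivAt.fun_mul (hdiff j x).hasFDerivAt))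
    have hconst : (fun y : Fin 3 → ℝ => ∑ j, u y j * u y j) = fun _ => (1:ℝ) :=
      funext fun y => by simpa [sq] using hu y
    rw [hconst] at hsum
    have h0 := hsum.unique (hasFDerivAt_const 1 x)
    have h0' := congrFun (congrArg (fun f => f.toFun) h0) (Pi.single k 1)
    simp [ContinuousLinearMap.sum_apply, ContinuousLinearMap.smul_apply] at h0'
    have : ∑ j, 2 * (u x j * pd u j k x) = 0 := by
      simpa [pd, two_mul, mul_add, Finset.sum_add_distrib] using h0'
    have h2 : (2:ℝ) * ∑ j, u x j * pd u j k x = 0 := by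
      rw [Finset.mul_sum]; exact this
    linarith
  have hu' := hu x
  simp only [Fin.sum_univ_three] at hu'
  have hz0 := hz 0; have hz1 := hz 1; have hz2 := hz 2
  simp only [Fin.sum_univ_three] at hz0 hz1 hz2
  set D := pd u 0 0 x + pd u 1 1 x + pd u 2 2 x with hD
  have key : ∀ i, ∑ j, (u x i * u x j) * (∑ k, pdQ Q k j k x) = s * u x i * D := by
    intro i
    simp only [Fin.sum_univ_three, hd]
    linear_combination (s * u x i * D) * hu' + s * u x i * u x 0 * hz0
      + s * u x i * u x 1 * hz1 + s * u x i * u x 2 * hz2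
  simp only [hc, key]
  rw [show (∑ i, pd u i i x) = D from Fin.sum_univ_three _, Fin.sum_univ_three]
  linear_combination (-(s^2 * D^2)) * hu'
end
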